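/- Let K be a commutative ring, A an m×m matrix over K, B an n×m matrix and C an m×n matrix over K, and let 0 ≤ k ≤ min(n, m). Then Σ_{P ∈ P_m} Σ_{Q ∈ Q_m} [B·Q·P·A·P^{-1}·Q·C]^{(k)} = 2^m · k! · (m−k)! · [B·C]^{(k)} · [A]^{(k)}, where 2^m, k! and (m−k)! denote the images of these natural numbers in K. -/

import Mathlib

/-- `[A]^(k)`: the sum of all principal `k × k` minors of `A`. -/
noncomputable def principalMinorSum {K : Type*} [CommRing K] {n : ℕ}
    (A : Matrix (Fin n) (Fin n) K) (k : ℕ) : K :=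
  ∑ S : {s : Finset (Fin n) // s.card = k},
    (A.submatrix (S.1.orderEmbOfFin S.2) (S.1.orderEmbOfFin S.2)).det

/-- The sign (diagonal `±1`) matrix determined by `ε : Fin m → Bool`. -/
def signMatrix (K : Type*) [CommRing K] {m : ℕ} (ε : Fin m → Bool) :
    Matrix (Fin m) (Fin m) K :=
  Matrix.diagonal (fun i => if ε i then 1 else -1)

/-!
Since `σ.permMatrix * A * σ.permMatrix⁻¹ = A.submatrix σ σ =: Aσ`, the matrix in question is
`B * (D Aσ D) * C` with `D = signMatrix ε = diagonal δ`. By Cauchy–Binet, applied twice, a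
`k × k` minor of it is the sum over pairs `(T, U)` of `k`-subsets of
`det B[S,T] * det (D Aσ D)[T,U] * det C[U,S]`, where
`det (D Aσ D)[T,U] = (∏_{x ∈ T} δ x) (∏_{x ∈ U} δ x) det Aσ[T,U]`. Summed over `ε`, these sign
factors cancel for `T ≠ U` and give `2 ^ m` for `T = U`. Next, `det Aσ[T,T] = det A[σ T, σ T]`,
and as `σ` runs over all permutations, `σ T` hits every `k`-subset exactly `k! (m - k)!` times.
What remains, `∑_T det B[S,T] * det C[T,S]`, is `det (B * C)[S,S]` by Cauchy–Binet once more.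
-/

open Finset Matrix

section OrderEmbOfFin

variable {α : Type*} [LinearOrder α] {k : ℕ}

theorem Finset.exists_perm_eq_orderEmbOfFin_comp (T : Finset α) (hT : T.card = k)
    {p : Fin k → α} (hp : Function.Injective p) (hpT : ∀ i, p i ∈ T) :
    ∃ ρ : Equiv.Perm (Fin k), p = T.orderEmbOfFin hT ∘ ρ := by
  let ρ : Fin k → Fin k := fun i => (T.orderIsoOfFin hT).symm ⟨p i, hpT i⟩
  have hρ : ∀ i, T.orderEmbOfFin hT (ρ i) = p i := fun i => by
    simp [ρ, ← Finset.coe_orderIsoOfFin_apply]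
  have hρinj : Function.Injective ρ := fun i j h => hp (by rw [← hρ i, ← hρ j, h])
  exact ⟨Equiv.ofBijective ρ hρinj.bijective_of_finite, funext fun i => (hρ i).symm⟩

theorem Finset.sum_eq_sum_sum_orderEmbOfFin_comp_perm [Fintype α] {M : Type*}
    [AddCommMonoid M] (F : (Fin k → α) → M) (hF : ∀ p, ¬ Function.Injective p → F p = 0) :
    ∑ p, F p = ∑ T : {s : Finset α // s.card = k}, ∑ ρ : Equiv.Perm (Fin k),
      F (T.1.orderEmbOfFin T.2 ∘ ρ) := by
  rw [← Fintype.sum_prod_type']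
  refine (Fintype.sum_of_injective (fun x : {s : Finset α // s.card = k} × Equiv.Perm (Fin k) =>
    x.1.1.orderEmbOfFin x.1.2 ∘ x.2) ?_ _ F ?_ fun _ => rfl).symm
  · rintro ⟨T, ρ⟩ ⟨T', ρ'⟩ h
    have hrange := congrArg Set.range h
    simp only [EquivLike.range_comp, Finset.range_orderEmbOfFin, Finset.coe_inj] at hrange
    obtain rfl : T = T' := Subtype.ext hrange
    exact Prod.ext rfl (Equiv.ext fun i => (T.1.orderEmbOfFin T.2).injective (congrFun h i))
  · intro p hp
    by_contra hFp
    have hinj : Function.Injective p := not_not.mp (mt (hF p) hFp)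
    have hcard : (univ.image p).card = k := by simp [card_image_of_injective _ hinj]
    obtain ⟨ρ, hρ⟩ := exists_perm_eq_orderEmbOfFin_comp _ hcard hinj (by simp)
    exact hp ⟨(⟨_, hcard⟩, ρ), hρ.symm⟩

theorem Finset.prod_orderEmbOfFin {M : Type*} [CommMonoid M] (T : Finset α) (hT : T.card = k)
    (g : α → M) : ∏ i, g (T.orderEmbOfFin hT i) = ∏ x ∈ T, g x := by
  rw [← prod_coe_sort T]
  exact Fintype.prod_equiv (T.orderIsoOfFin hT).toEquiv _ _ fun i => by simp

end OrderEmbOfFin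

section PermCount

open Nat

variable {α : Type*} [Fintype α] [DecidableEq α]

theorem Equiv.Perm.card_map_finset_eq {s t : Finset α} (h : s.card = t.card) :
    Fintype.card {σ : Equiv.Perm α // s.map σ.toEmbedding = t}
      = s.card ! * (Fintype.card α - s.card)! := by
  classical
  obtain ⟨τ, rfl⟩ := Equiv.Perm.exists_map_finset_eq s t h
  -- `σ ↦ σ⁻¹ * τ` identifies these `σ` with the permutations preserving membership in `s`
  have hstab : ∀ σ : Equiv.Perm α, s.map σ.toEmbedding = s.map τ.toEmbedding ↔
      (· ∈ s) ∘ ⇑(((Equiv.inv _).trans (Equiv.mulRight τ)) σ) = (· ∈ s) := by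
    intro σ
    simp only [Finset.ext_iff, mem_map_equiv, funext_iff]
    exact ⟨fun hσ x => by simpa using hσ (τ x), fun hσ b => by simpa using hσ (τ⁻¹ b)⟩
  rw [Fintype.card_congr (Equiv.subtypeEquiv
      (q := fun g : Equiv.Perm α => (· ∈ s) ∘ ⇑g = (· ∈ s)) _ hstab),
    DomMulAct.stabilizer_card, Fintype.prod_Prop]
  simp [Fintype.card_subtype_compl]

theorem Equiv.Perm.sum_map_finset {M : Type*} [AddCommMonoid M] {k : ℕ} (s : Finset α)
    (hs : s.card = k) (G : {t : Finset α // t.card = k} → M) :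
    ∑ σ : Equiv.Perm α, G ⟨s.map σ.toEmbedding, (card_map _).trans hs⟩
      = (k ! * (Fintype.card α - k)!) • ∑ t, G t := by
  rw [← Fintype.sum_fiberwise' (fun σ : Equiv.Perm α => (⟨s.map σ.toEmbedding,
    (card_map _).trans hs⟩ : {t : Finset α // t.card = k})) G, smul_sum]
  refine sum_congr rfl fun t _ => ?_
  rw [sum_const, Finset.card_univ,
    Fintype.card_congr (Equiv.subtypeEquivRight fun σ => Subtype.ext_iff),
    card_map_finset_eq (hs.trans t.2.symm), hs]

end PermCount

section Minors

variable {R : Type*} [CommRing R]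

theorem sum_prod_sign_mul_prod_sign {α : Type*} [Fintype α] [DecidableEq α] (s t : Finset α) :
    ∑ ε : α → Bool,
        (∏ x ∈ s, (if ε x then (1 : R) else -1)) * ∏ x ∈ t, (if ε x then 1 else -1)
      = if s = t then 2 ^ Fintype.card α else 0 := by
  let g : α → Bool → R := fun x b =>
    (if x ∈ s then (if b then 1 else -1) else 1) * (if x ∈ t then (if b then 1 else -1) else 1)
  have hε : ∀ ε : α → Bool, (∏ x ∈ s, (if ε x then (1 : R) else -1)) *
      ∏ x ∈ t, (if ε x then 1 else -1) = ∏ x, g x (ε x) := fun ε => by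
    rw [← Fintype.prod_ite_mem s, ← Fintype.prod_ite_mem t, ← prod_mul_distrib]
  have hg : ∀ x, ∑ b, g x b = if (x ∈ s ↔ x ∈ t) then 2 else 0 := by
    intro x
    by_cases hs : x ∈ s <;> by_cases ht : x ∈ t <;> simp [g, hs, ht, one_add_one_eq_two]
  rw [sum_congr rfl fun ε _ => hε ε, ← Fintype.prod_sum]
  simp only [hg, Fintype.prod_ite_zero, prod_const, card_univ, ← Finset.ext_iff]

namespace Matrix

theorem det_mul_eq_sum_prod_mul_det_submatrix {α : Type*} [Fintype α] {k : ℕ}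
    (B : Matrix (Fin k) α R) (C : Matrix α (Fin k) R) :
    (B * C).det = ∑ p : Fin k → α, (∏ i, B i (p i)) * (C.submatrix p id).det := by
  have hrows : B * C = fun i => ∑ j, B i j • C j := by
    ext i l; simp [Matrix.mul_apply, Finset.sum_apply]
  rw [hrows]
  exact (detRowAlternating.toMultilinearMap.map_sum _).trans
    (Finset.sum_congr rfl fun p _ => MultilinearMap.map_smul_univ _ _ _)

/-- The Cauchy–Binet formula. -/
theorem det_submatrix_mul_eq_sum {α l o : Type*} [Fintype α] [LinearOrder α] {k : ℕ}
    (B : Matrix l α R) (C : Matrix α o R) (e : Fin k → l) (f : Fin k → o) :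
    ((B * C).submatrix e f).det = ∑ T : {s : Finset α // s.card = k},
      (B.submatrix e (T.1.orderEmbOfFin T.2)).det *
        (C.submatrix (T.1.orderEmbOfFin T.2) f).det := by
  rw [submatrix_mul _ _ _ id _ Function.bijective_id, det_mul_eq_sum_prod_mul_det_submatrix,
    sum_eq_sum_sum_orderEmbOfFin_comp_perm]
  · refine Finset.sum_congr rfl fun T _ => ?_
    set t := T.1.orderEmbOfFin T.2
    have hperm : ∀ ρ : Equiv.Perm (Fin k), (C.submatrix id f).submatrix (t ∘ ρ) id =
        (C.submatrix t f).submatrix ρ id := fun ρ => rfl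
    simp only [hperm, det_permute]
    rw [← det_transpose (B.submatrix e t), det_apply' (B.submatrix e t)ᵀ, Finset.sum_mul]
    refine Finset.sum_congr rfl fun ρ _ => ?_
    simp only [transpose_apply, submatrix_apply, id, Function.comp_apply]
    ring
  · intro p hp
    obtain ⟨i, j, hpij, hij⟩ := Function.not_injective_iff.mp hp
    rw [det_zero_of_row_eq hij (by ext; simp [hpij]), mul_zero]

theorem det_submatrix_mul_mul_eq_sum {α l o : Type*} [Fintype α] [LinearOrder α] {k : ℕ}
    (B : Matrix l α R) (X : Matrix α α R) (C : Matrix α o R) (e : Fin k → l)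
    (f : Fin k → o) :
    ((B * X * C).submatrix e f).det = ∑ T : {s : Finset α // s.card = k},
      ∑ U : {s : Finset α // s.card = k}, (B.submatrix e (T.1.orderEmbOfFin T.2)).det *
        (X.submatrix (T.1.orderEmbOfFin T.2) (U.1.orderEmbOfFin U.2)).det *
          (C.submatrix (U.1.orderEmbOfFin U.2) f).det := by
  simp only [det_submatrix_mul_eq_sum (B * X) C, det_submatrix_mul_eq_sum B X, sum_mul]
  exact sum_comm

theorem permMatrix_mul_mul_inv {α : Type*} [Fintype α] [DecidableEq α] (σ : Equiv.Perm α)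
    (A : Matrix α α R) : σ.permMatrix R * A * (σ.permMatrix R)⁻¹ = A.submatrix σ σ := by
  rw [inv_eq_left_inv (by rw [← permMatrix_mul, mul_inv_cancel, permMatrix_one]),
    PEquiv.toMatrix_toPEquiv_mul, PEquiv.mul_toMatrix_toPEquiv]
  rfl

theorem det_submatrix_diagonal_mul_mul_diagonal {α ι : Type*} [Fintype α] [DecidableEq α]
    [Fintype ι] [DecidableEq ι] (d : α → R) (X : Matrix α α R) (f g : ι → α) :
    ((diagonal d * X * diagonal d).submatrix f g).det
      = (∏ i, d (f i)) * (∏ i, d (g i)) * (X.submatrix f g).det := by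
  have h : (diagonal d * X * diagonal d).submatrix f g
      = diagonal (fun i => d (f i)) * X.submatrix f g * diagonal (fun i => d (g i)) := by
    ext; simp [diagonal_mul, mul_diagonal]
  rw [h, det_mul, det_mul, det_diagonal, det_diagonal]
  ring

theorem det_submatrix_perm_orderEmbOfFin {α : Type*} [LinearOrder α] {k : ℕ}
    (A : Matrix α α R) (σ : Equiv.Perm α) (T : Finset α) (hT : T.card = k) :
    ((A.submatrix σ σ).submatrix (T.orderEmbOfFin hT) (T.orderEmbOfFin hT)).det
      = (A.submatrix ((T.map σ.toEmbedding).orderEmbOfFin ((card_map _).trans hT))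
          ((T.map σ.toEmbedding).orderEmbOfFin ((card_map _).trans hT))).det := by
  obtain ⟨ρ, hρ⟩ := exists_perm_eq_orderEmbOfFin_comp (T.map σ.toEmbedding)
    ((card_map _).trans hT) (p := σ ∘ T.orderEmbOfFin hT)
    (σ.injective.comp (T.orderEmbOfFin hT).injective)
    (fun i => mem_map_of_mem _ (orderEmbOfFin_mem T hT i))
  rw [submatrix_submatrix, hρ, ← submatrix_submatrix, det_submatrix_equiv_self]

end Matrix

theorem sum_perm_det_submatrix_conj_eq_mul_principalMinorSum {m k : ℕ}
    (A : Matrix (Fin m) (Fin m) R) (T : Finset (Fin m)) (hT : T.card = k) :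
    ∑ σ : Equiv.Perm (Fin m),
        ((A.submatrix σ σ).submatrix (T.orderEmbOfFin hT) (T.orderEmbOfFin hT)).det
      = (k.factorial * (m - k).factorial : ℕ) * principalMinorSum A k := by
  simp only [det_submatrix_perm_orderEmbOfFin]
  rw [Equiv.Perm.sum_map_finset T hT (fun S => (A.submatrix (S.1.orderEmbOfFin S.2)
    (S.1.orderEmbOfFin S.2)).det), nsmul_eq_mul, Fintype.card_fin, principalMinorSum]

theorem sum_signMatrix_det_submatrix_conj {m k : ℕ} {l o : Type*} (B : Matrix l (Fin m) R)
    (X : Matrix (Fin m) (Fin m) R) (C : Matrix (Fin m) o R) (e : Fin k → l) (f : Fin k → o) :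
    ∑ ε : Fin m → Bool, ((B * (signMatrix R ε * X * signMatrix R ε) * C).submatrix e f).det
      = 2 ^ m * ∑ T : {s : Finset (Fin m) // s.card = k},
          (B.submatrix e (T.1.orderEmbOfFin T.2)).det *
            (X.submatrix (T.1.orderEmbOfFin T.2) (T.1.orderEmbOfFin T.2)).det *
              (C.submatrix (T.1.orderEmbOfFin T.2) f).det := by
  let sgn : (Fin m → Bool) → Finset (Fin m) → R :=
    fun ε s => ∏ x ∈ s, if ε x then 1 else -1
  calc _ = ∑ T : {s : Finset (Fin m) // s.card = k}, ∑ U : {s : Finset (Fin m) // s.card = k},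
        (B.submatrix e (T.1.orderEmbOfFin T.2)).det *
          (X.submatrix (T.1.orderEmbOfFin T.2) (U.1.orderEmbOfFin U.2)).det *
            (C.submatrix (U.1.orderEmbOfFin U.2) f).det * ∑ ε, sgn ε T.1 * sgn ε U.1 := by
        simp only [det_submatrix_mul_mul_eq_sum, signMatrix,
          det_submatrix_diagonal_mul_mul_diagonal, mul_sum]
        rw [sum_comm]
        refine sum_congr rfl fun T _ => ?_
        rw [sum_comm]
        refine sum_congr rfl fun U _ => sum_congr rfl fun ε _ => ?_
        dsimp only [sgn]
        rw [← prod_orderEmbOfFin T.1 T.2, ← prod_orderEmbOfFin U.1 U.2]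
        ring
    _ = _ := by
        simp only [sgn, sum_prod_sign_mul_prod_sign, Fintype.card_fin, ← Subtype.ext_iff,
          mul_ite, mul_zero, sum_ite_eq, mem_univ, if_true, mul_sum]
        exact sum_congr rfl fun T _ => by ring

theorem sum_perm_sum_signMatrix_det_submatrix_conj {m k : ℕ} {l o : Type*}
    (A : Matrix (Fin m) (Fin m) R) (B : Matrix l (Fin m) R) (C : Matrix (Fin m) o R)
    (e : Fin k → l) (f : Fin k → o) :
    ∑ σ : Equiv.Perm (Fin m), ∑ ε : Fin m → Bool,
        ((B * (signMatrix R ε * A.submatrix σ σ * signMatrix R ε) * C).submatrix e f).det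
      = (2 ^ m * k.factorial * (m - k).factorial : ℕ) * principalMinorSum A k *
          ((B * C).submatrix e f).det := by
  simp only [sum_signMatrix_det_submatrix_conj]
  calc _ = 2 ^ m * ∑ T : {s : Finset (Fin m) // s.card = k},
        (B.submatrix e (T.1.orderEmbOfFin T.2)).det *
          (C.submatrix (T.1.orderEmbOfFin T.2) f).det *
            ∑ σ : Equiv.Perm (Fin m), ((A.submatrix σ σ).submatrix (T.1.orderEmbOfFin T.2)
              (T.1.orderEmbOfFin T.2)).det := by
        rw [← mul_sum, sum_comm]
        simp only [mul_sum]
        exact sum_congr rfl fun T _ => sum_congr rfl fun σ _ => by ring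
    _ = _ := by
        simp only [sum_perm_det_submatrix_conj_eq_mul_principalMinorSum,
          det_submatrix_mul_eq_sum B C, mul_sum]
        push_cast
        exact sum_congr rfl fun T _ => by ring

end Minors

theorem sum_principalMinorSum_conj_mul_general
    {K : Type*} [CommRing K] {m n : ℕ}
    (A : Matrix (Fin m) (Fin m) K) (B : Matrix (Fin n) (Fin m) K)
    (C : Matrix (Fin m) (Fin n) K) (k : ℕ) :
    (∑ σ : Equiv.Perm (Fin m), ∑ ε : Fin m → Bool,
        principalMinorSum
          (B * signMatrix K ε * σ.permMatrix K * A * (σ.permMatrix K)⁻¹ * signMatrix K ε * C) k)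
      = (2 ^ m * k.factorial * (m - k).factorial : ℕ) *
          principalMinorSum (B * C) k * principalMinorSum A k := by
  have hconj : ∀ (σ : Equiv.Perm (Fin m)) (ε : Fin m → Bool),
      B * signMatrix K ε * σ.permMatrix K * A * (σ.permMatrix K)⁻¹ * signMatrix K ε * C
        = B * (signMatrix K ε * A.submatrix σ σ * signMatrix K ε) * C := fun σ ε => by
    rw [← permMatrix_mul_mul_inv]
    simp only [Matrix.mul_assoc]
  calc _ = ∑ S : {s : Finset (Fin n) // s.card = k}, ∑ σ : Equiv.Perm (Fin m),
        ∑ ε : Fin m → Bool,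
          ((B * (signMatrix K ε * A.submatrix σ σ * signMatrix K ε) * C).submatrix
            (S.1.orderEmbOfFin S.2) (S.1.orderEmbOfFin S.2)).det := by
        simp only [hconj, principalMinorSum]
        rw [sum_congr rfl fun σ _ => sum_comm, sum_comm]
    _ = _ := by
        simp only [sum_perm_sum_signMatrix_det_submatrix_conj, ← mul_sum]
        exact mul_right_comm _ _ _

theorem sum_principalMinorSum_conj_mul
    {K : Type*} [CommRing K] {m n : ℕ}
    (A : Matrix (Fin m) (Fin m) K) (B : Matrix (Fin n) (Fin m) K)
    (C : Matrix (Fin m) (Fin n) K) (k : ℕ) (hkn : k ≤ n) (hkm : k ≤ m) :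
    (∑ σ : Equiv.Perm (Fin m), ∑ ε : Fin m → Bool,
        principalMinorSum
          (B * signMatrix K ε * σ.permMatrix K * A * (σ.permMatrix K)⁻¹ * signMatrix K ε * C) k)
      = (2 ^ m * k.factorial * (m - k).factorial : ℕ) *
          principalMinorSum (B * C) k * principalMinorSum A k :=
  sum_principalMinorSum_conj_mul_general A B C k
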